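/- arXiv:2507.02522 — 6 statements merged into one kernel-verified Lean document; each statement's English description precedes it below -/
import Mathlib

section
/- Let γ = (A B; C D) ∈ SL₂(ℝ) and let z ∈ ℍ be a fixed point of γ, i.e. γz = z. Then for every w ∈ ℍ one has u(w, γw) = 4·u(z,w)·(u(z,w) + 1)·C²·(Im z)². -/
noncomputable section

/-- Möbius action of a real matrix on ℂ. -/
def moebR (g : Matrix (Fin 2) (Fin 2) ℝ) (z : ℂ) : ℂ :=
  ((g 0 0 : ℂ) * z + (g 0 1 : ℂ)) / ((g 1 0 : ℂ) * z + (g 1 1 : ℂ))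

/-- u(z,w) = |z−w|² / (4 Im z Im w). -/
def uu (z w : ℂ) : ℝ := ‖z - w‖ ^ 2 / (4 * z.im * w.im)

theorem stmt2 (A B C D : ℝ) (hdet : A * D - B * C = 1)
    (z : ℂ) (hz : 0 < z.im) (hfix : moebR !![A, B; C, D] z = z)
    (w : ℂ) (hw : 0 < w.im) :
    uu w (moebR !![A, B; C, D] w) = 4 * uu z w * (uu z w + 1) * C ^ 2 * z.im ^ 2 := by
  have hg : ∀ v : ℂ, moebR !![A, B; C, D] v = ((A:ℂ)*v + B)/((C:ℂ)*v + D) := by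
    intro v
    simp [moebR, Matrix.cons_val_zero, Matrix.cons_val_one, Matrix.head_cons]
  have hden : ∀ v : ℂ, 0 < v.im → (C:ℂ)*v + D ≠ 0 := by
    intro v hv h
    have him : C * v.im = 0 := by
      have := congrArg Complex.im h
      simpa [Complex.add_im, Complex.mul_im] using this
    rcases mul_eq_zero.mp him with hC | hvim
    · have hre := congrArg Complex.re h
      simp [Complex.add_re, Complex.mul_re, hC] at hre
      rw [hC, hre] at hdet
      simp at hdet
    · linarith
  have hzeq : (A:ℂ)*z + B = z * ((C:ℂ)*z + D) := by
    have h := hfix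
    rw [hg z, div_eq_iff (hden z hz)] at h
    exact h
  have hzeq' : (A:ℂ)*(starRingEnd ℂ) z + B = (starRingEnd ℂ) z * ((C:ℂ)*(starRingEnd ℂ) z + D) := by
    have := congrArg (starRingEnd ℂ) hzeq
    simpa [map_add, map_mul, Complex.conj_ofReal] using this
  have hzne : z - (starRingEnd ℂ) z ≠ 0 := by
    intro h
    have := congrArg Complex.im h
    simp [Complex.sub_im, Complex.conj_im] at this
    linarith
  have hA : (A:ℂ) - D = C * (z + (starRingEnd ℂ) z) := by
    apply mul_right_cancel₀ hzne
    linear_combination hzeq - hzeq'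
  have hB : (B:ℂ) = -(C * (z * (starRingEnd ℂ) z)) := by
    linear_combination hzeq - z * hA
  have hwden := hden w hw
  have hdiff : w - moebR !![A, B; C, D] w
      = (C:ℂ)*(w-z)*(w - (starRingEnd ℂ) z) / ((C:ℂ)*w + D) := by
    rw [hg w]
    rw [eq_div_iff hwden, sub_mul, div_mul_cancel₀ _ hwden]
    linear_combination -w * hA - hB
  have hS : Complex.normSq ((C:ℂ)*w + D) ≠ 0 := by
    simpa using hwden
  have himg : (moebR !![A, B; C, D] w).im = w.im / Complex.normSq ((C:ℂ)*w + D) := by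
    rw [hg w, Complex.div_im]
    rw [div_sub_div_same, div_left_inj' hS]
    simp only [Complex.add_im, Complex.add_re, Complex.mul_im, Complex.mul_re, Complex.ofReal_re, Complex.ofReal_im]
    linear_combination w.im * hdet
  have hq : w.im ≠ 0 := ne_of_gt hw
  have hy : z.im ≠ 0 := ne_of_gt hz
  rw [uu, uu, hdiff, himg, Complex.sq_norm, Complex.sq_norm, map_div₀, map_mul, map_mul]
  set S := Complex.normSq ((C:ℂ)*w + D) with hSdef
  simp only [Complex.normSq_ofReal, Complex.normSq_apply, Complex.sub_re, Complex.sub_im,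
    Complex.conj_re, Complex.conj_im, Complex.ofReal_re, Complex.ofReal_im]
  field_simp
  ring

end
end

section
/- Let γ ∈ SL₂(ℝ) be elliptic with trace τ, and let z₀ ∈ ℍ be its fixed point (γz₀ = z₀). Then for every w ∈ ℍ one has u(w, γw) = (4 − τ²)·u(z₀,w)·(u(z₀,w) + 1). -/
noncomputable section

theorem stmt3 (a b c d : ℝ) (hdet : a * d - b * c = 1) (hell : (a + d) ^ 2 < 4)
    (z0 : ℂ) (hz0 : 0 < z0.im) (hfix : moebR !![a, b; c, d] z0 = z0)
    (w : ℂ) (hw : 0 < w.im) :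
    uu w (moebR !![a, b; c, d] w) = (4 - (a + d) ^ 2) * uu z0 w * (uu z0 w + 1) := by
  have hmo : ∀ z : ℂ, moebR !![a, b; c, d] z = ((a:ℂ)*z+b)/((c:ℂ)*z+d) := by
    intro z
    simp [moebR, Matrix.cons_val_zero, Matrix.cons_val_one, Matrix.head_cons]
  rw [hmo] at hfix
  have hy : z0.im ≠ 0 := ne_of_gt hz0
  have hq : w.im ≠ 0 := ne_of_gt hw
  -- c ≠ 0
  have hc : c ≠ 0 := by
    intro h0
    subst h0
    have hd0 : (d:ℂ) ≠ 0 := by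
      simp only [ne_eq, Complex.ofReal_eq_zero]
      intro h; subst h; norm_num at hdet
    rw [show ((0:ℝ):ℂ) * z0 + (d:ℂ) = (d:ℂ) by push_cast; ring,
      div_eq_iff hd0] at hfix
    have h2 := congrArg Complex.im hfix
    simp [Complex.add_im, Complex.mul_im] at h2
    have had : (a - d) * z0.im = 0 := by linear_combination h2
    rcases mul_eq_zero.mp had with h | h
    · nlinarith [hdet, hell]
    · exact absurd h hy
  -- fixed point quadratic
  have hJ0 : (c:ℂ) * z0 + d ≠ 0 := by
    intro h
    have := congrArg Complex.im h
    simp [Complex.add_im, Complex.mul_im] at this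
    rcases this with h | h
    · exact hc h
    · exact hy h
  rw [div_eq_iff hJ0] at hfix
  have hre := congrArg Complex.re hfix
  have him := congrArg Complex.im hfix
  simp [pow_two, Complex.add_re, Complex.add_im, Complex.sub_re, Complex.sub_im,
    Complex.mul_re, Complex.mul_im] at hre him
  have hd : d = a - 2 * c * z0.re := by
    have h : (2 * c * z0.re + (d - a)) * z0.im = 0 := by linear_combination -him
    rcases mul_eq_zero.mp h with h | h
    · linarith
    · exact absurd h hy
  have hb : b = -(c * (z0.re^2 + z0.im^2)) := by
    rw [hd] at hre
    nlinarith [hre]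
  subst hd hb
  have key : 4 - (a + (a - 2 * c * z0.re)) ^ 2 = 4 * c^2 * z0.im^2 := by
    linear_combination -4 * hdet
  rw [hmo, key]
  set A : ℂ := (a:ℂ) * w + ((-(c * (z0.re^2 + z0.im^2)) : ℝ):ℂ) with hA
  set J : ℂ := (c:ℂ) * w + ((a - 2*c*z0.re : ℝ):ℂ) with hJdef
  have hJ : J ≠ 0 := by
    intro h
    have := congrArg Complex.im h
    simp [hJdef, Complex.add_im, Complex.mul_im] at this
    rcases this with h | h
    · exact hc h
    · exact hq h
  have hns : Complex.normSq J ≠ 0 := (Complex.normSq_pos.mpr hJ).ne'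
  have h1 : (A / J).im = w.im / Complex.normSq J := by
    rw [Complex.div_im]
    field_simp
    simp [hA, hJdef, Complex.add_re, Complex.add_im, Complex.mul_re, Complex.mul_im, pow_two]
    nlinarith [hdet]
  have h2 : w - A / J = ((c:ℂ)*w^2 + ((-2*c*z0.re : ℝ):ℂ)*w + ((c*(z0.re^2+z0.im^2) : ℝ):ℂ)) / J := by
    rw [eq_div_iff hJ, sub_mul, div_mul_cancel₀ _ hJ, hA, hJdef]
    push_cast
    ring
  rw [uu, uu, Complex.sq_norm, Complex.sq_norm, h2, h1, map_div₀]
  field_simp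
  simp only [hJdef, Complex.normSq_apply, Complex.add_re, Complex.add_im, Complex.sub_re,
    Complex.sub_im, Complex.mul_re, Complex.mul_im, Complex.ofReal_re, Complex.ofReal_im,
    Complex.neg_re, Complex.neg_im, Complex.re_ofNat, Complex.im_ofNat, pow_two]
  ring
end
end

section
/- Let γ₁ = (a b; c d) and γ₂ = (A B; C D) be elliptic elements of SL₂(ℝ) whose fixed points in ℍ are distinct. Then |F(γ₁,γ₂)| > 1, where F(γ₁,γ₂) = ((d−a)(D−A) + 2bC + 2Bc) / (√(4−(a+d)²)·√(4−(A+D)²)). -/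
/-!
A fixed point `z = x + iy ∈ ℍ` of `γ = (a b; c d) ∈ SL₂(ℝ)` is a root of `c z² + (d - a) z - b`,
so `d - a = -2cx`, `b = -c|z|²` and `4 - (a + d)² = (2cy)²`. Substituting these into `F` gives
`F(γ₁, γ₂) = ∓((x₁ - x₂)² + y₁² + y₂²) / (2y₁y₂) = ∓cosh d_ℍ(z₁, z₂)`,
which exceeds `1` in absolute value as soon as `z₁ ≠ z₂`.
-/

noncomputable section

open Complex

section FixedPoint

variable {a b c d : ℝ} {z : ℂ}

theorem moebR_denom_ne_zero (hdet : a * d - b * c = 1) (hz : z.im ≠ 0) :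
    (c : ℂ) * z + d ≠ 0 := by
  intro h
  have hc : c = 0 := by simpa [hz] using congrArg Complex.im h
  have hd : d = 0 := by simpa [hc] using congrArg Complex.re h
  simp [hc, hd] at hdet

theorem quadratic_eq_zero_of_moebR_eq_self (hdet : a * d - b * c = 1) (hz : z.im ≠ 0)
    (hfix : moebR !![a, b; c, d] z = z) : (c : ℂ) * z ^ 2 + (d - a) * z - b = 0 := by
  simp only [moebR, Matrix.of_apply, Matrix.cons_val', Matrix.cons_val_zero, Matrix.cons_val_one,
    Matrix.empty_val', Matrix.cons_val_fin_one, div_eq_iff (moebR_denom_ne_zero hdet hz)] at hfix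
  linear_combination -hfix

theorem sub_eq_of_quadratic_eq_zero (hz : z.im ≠ 0) (h : (c : ℂ) * z ^ 2 + (d - a) * z - b = 0) :
    d - a = -(2 * c * z.re) := by
  have him : (2 * c * z.re + (d - a)) * z.im = 0 := by
    have := congrArg Complex.im h
    simp only [sq, sub_im, sub_re, add_im, mul_im, ofReal_re, ofReal_im, mul_re, zero_mul, add_zero,
      sub_zero, zero_im] at this
    linear_combination this
  linear_combination (mul_eq_zero.1 him).resolve_right hz

theorem eq_neg_mul_normSq_of_quadratic_eq_zero (hz : z.im ≠ 0)
    (h : (c : ℂ) * z ^ 2 + (d - a) * z - b = 0) : b = -(c * normSq z) := by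
  have hre := congrArg Complex.re h
  simp only [sq, sub_re, sub_im, add_re, mul_re, ofReal_re, ofReal_im, mul_im, zero_mul, sub_zero,
    zero_re] at hre
  rw [normSq_apply]
  linear_combination -hre + z.re * sub_eq_of_quadratic_eq_zero hz h

theorem four_sub_sq_trace_eq (hdet : a * d - b * c = 1) (hz : z.im ≠ 0)
    (h : (c : ℂ) * z ^ 2 + (d - a) * z - b = 0) : 4 - (a + d) ^ 2 = (2 * c * z.im) ^ 2 := by
  have hda := sub_eq_of_quadratic_eq_zero hz h
  have hb := eq_neg_mul_normSq_of_quadratic_eq_zero hz h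
  rw [normSq_apply] at hb
  linear_combination -4 * hdet - 4 * c * hb - (d - a - 2 * c * z.re) * hda

theorem sqrt_four_sub_sq_trace (hdet : a * d - b * c = 1) (hz : 0 < z.im)
    (h : (c : ℂ) * z ^ 2 + (d - a) * z - b = 0) : √(4 - (a + d) ^ 2) = 2 * |c| * z.im := by
  rw [four_sub_sq_trace_eq hdet hz.ne' h, Real.sqrt_sq_eq_abs, abs_mul, abs_mul, abs_two,
    abs_of_pos hz]

theorem ne_zero_of_sq_trace_lt_four (hdet : a * d - b * c = 1) (hz : z.im ≠ 0)
    (h : (c : ℂ) * z ^ 2 + (d - a) * z - b = 0) (hell : (a + d) ^ 2 < 4) : c ≠ 0 := by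
  rintro rfl
  have := four_sub_sq_trace_eq hdet hz h
  rw [mul_zero, zero_mul, zero_pow two_ne_zero] at this
  linarith

end FixedPoint

section Pairing

variable {a b c d A B C D : ℝ}

-- The numerator of `F` is `2 tr(γ₁γ₂) - tr γ₁ tr γ₂`.
theorem pairing_eq_of_quadratic_eq_zero {z w : ℂ} (hz : z.im ≠ 0) (hw : w.im ≠ 0)
    (hq1 : (c : ℂ) * z ^ 2 + (d - a) * z - b = 0) (hq2 : (C : ℂ) * w ^ 2 + (D - A) * w - B = 0) :
    (d - a) * (D - A) + 2 * b * C + 2 * B * c =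
      -(2 * c * C) * ((z.re - w.re) ^ 2 + z.im ^ 2 + w.im ^ 2) := by
  rw [sub_eq_of_quadratic_eq_zero hz hq1, sub_eq_of_quadratic_eq_zero hw hq2,
    eq_neg_mul_normSq_of_quadratic_eq_zero hz hq1, eq_neg_mul_normSq_of_quadratic_eq_zero hw hq2,
    normSq_apply, normSq_apply]
  ring

theorem abs_pairing_div_eq_cosh_dist (z w : UpperHalfPlane)
    (hdet1 : a * d - b * c = 1) (hdet2 : A * D - B * C = 1)
    (hell1 : (a + d) ^ 2 < 4) (hell2 : (A + D) ^ 2 < 4)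
    (hq1 : (c : ℂ) * (z : ℂ) ^ 2 + (d - a) * z - b = 0)
    (hq2 : (C : ℂ) * (w : ℂ) ^ 2 + (D - A) * w - B = 0) :
    |((d - a) * (D - A) + 2 * b * C + 2 * B * c) /
        (√(4 - (a + d) ^ 2) * √(4 - (A + D) ^ 2))| = Real.cosh (dist z w) := by
  have hc := ne_zero_of_sq_trace_lt_four hdet1 z.im_ne_zero hq1 hell1
  have hC := ne_zero_of_sq_trace_lt_four hdet2 w.im_ne_zero hq2 hell2
  have hS : 0 < (z.re - w.re) ^ 2 + z.im ^ 2 + w.im ^ 2 := by positivity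
  rw [UpperHalfPlane.cosh_dist', pairing_eq_of_quadratic_eq_zero z.im_ne_zero w.im_ne_zero hq1 hq2,
    sqrt_four_sub_sq_trace hdet1 z.im_pos hq1, sqrt_four_sub_sq_trace hdet2 w.im_pos hq2,
    UpperHalfPlane.coe_re, UpperHalfPlane.coe_re, UpperHalfPlane.coe_im, UpperHalfPlane.coe_im,
    abs_div, abs_mul, abs_neg, abs_mul, abs_mul, abs_two, abs_of_pos hS,
    abs_of_pos (by positivity : 0 < 2 * |c| * z.im * (2 * |C| * w.im))]
  field_simp

end Pairing

theorem stmt4 (a b c d A B C D : ℝ)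
    (hdet1 : a * d - b * c = 1) (hdet2 : A * D - B * C = 1)
    (hell1 : (a + d) ^ 2 < 4) (hell2 : (A + D) ^ 2 < 4)
    (z1 z2 : ℂ) (hz1 : 0 < z1.im) (hz2 : 0 < z2.im)
    (hfix1 : moebR !![a, b; c, d] z1 = z1) (hfix2 : moebR !![A, B; C, D] z2 = z2)
    (hne : z1 ≠ z2) :
    1 < |((d - a) * (D - A) + 2 * b * C + 2 * B * c) /
        (Real.sqrt (4 - (a + d) ^ 2) * Real.sqrt (4 - (A + D) ^ 2))| := by
  rw [abs_pairing_div_eq_cosh_dist ⟨z1, hz1⟩ ⟨z2, hz2⟩ hdet1 hdet2 hell1 hell2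
    (quadratic_eq_zero_of_moebR_eq_self hdet1 hz1.ne' hfix1)
    (quadratic_eq_zero_of_moebR_eq_self hdet2 hz2.ne' hfix2)]
  exact Real.one_lt_cosh.2 (dist_ne_zero.2 fun h ↦ hne (congrArg UpperHalfPlane.coe h))
end
end

section
/- There is an absolute constant E > 0 with the following property. Let γ₁ and γ₂ be elliptic elements of SL₂(ℝ) with the same fixed point in ℍ, and let τ₁ = tr γ₁, τ₂ = tr γ₂. Then for all m₁, m₂ ∈ 𝒦_E one has ∫_ℍ m₁(u(z,γ₁z))·m₂(u(z,γ₂z)) dμ_z = 4π ∫₀^∞ m₁((4−τ₁²)·r(1+r))·m₂((4−τ₂²)·r(1+r)) dr. -/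
noncomputable section

open MeasureTheory

/-- 𝒦_E: measurable functions m on [0,∞) with m(u)(1+u)^E bounded. -/
def KE (E : ℝ) : Set (ℝ → ℝ) :=
  {m | Measurable m ∧ ∃ B : ℝ, ∀ u : ℝ, 0 ≤ u → |m u| * (1 + u) ^ E ≤ B}

lemma aux_normSq_sub_conj (z w : ℂ) :
    Complex.normSq (z - (starRingEnd ℂ) w) = Complex.normSq (z - w) + 4 * z.im * w.im := by
  simp only [Complex.normSq_apply, Complex.sub_re, Complex.sub_im, Complex.conj_re,
    Complex.conj_im]
  ring

/-- Cayley-type map: disc coordinate `w` to upper half plane around `z0`. -/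
def Tm (z0 w : ℂ) : ℂ :=
  (z0.re : ℂ) + (z0.im : ℂ) * (Complex.I * (1 + w) / (1 - w))

lemma aux_one_sub_ne (w : ℂ) (hw : Complex.normSq w < 1) : 1 - w ≠ 0 := by
  intro h
  have : w = 1 := by linear_combination -h
  rw [this] at hw
  norm_num at hw

lemma Tm_im (z0 w : ℂ) (hw : Complex.normSq w < 1) :
    (Tm z0 w).im = z0.im * (1 - Complex.normSq w) / Complex.normSq (1 - w) := by
  have h1 : (1:ℂ) - w ≠ 0 := aux_one_sub_ne w hw
  rw [Tm]
  rw [Complex.add_im, Complex.ofReal_im, Complex.mul_im, Complex.ofReal_re, Complex.ofReal_im,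
    Complex.div_im]
  simp only [Complex.mul_im, Complex.mul_re, Complex.add_re, Complex.add_im, Complex.one_re,
    Complex.one_im, Complex.I_re, Complex.I_im, Complex.sub_re, Complex.sub_im,
    Complex.normSq_apply]
  field_simp
  ring

lemma Tm_im_pos (z0 w : ℂ) (h0 : 0 < z0.im) (hw : Complex.normSq w < 1) :
    0 < (Tm z0 w).im := by
  rw [Tm_im z0 w hw]
  have h1 : (1:ℂ) - w ≠ 0 := aux_one_sub_ne w hw
  have h2 : 0 < Complex.normSq (1 - w) := Complex.normSq_pos.2 h1
  exact div_pos (mul_pos h0 (by linarith)) h2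

lemma Tm_sub (z0 w : ℂ) (hw : Complex.normSq w < 1) :
    Tm z0 w - z0 = (z0.im : ℂ) * (2 * Complex.I * w) / (1 - w) := by
  have h1 : (1:ℂ) - w ≠ 0 := aux_one_sub_ne w hw
  have hz0 : (z0.re : ℂ) + z0.im * Complex.I = z0 := Complex.re_add_im z0
  rw [Tm]
  field_simp
  linear_combination (1 - w) * hz0

lemma Tm_sub_conj (z0 w : ℂ) (hw : Complex.normSq w < 1) :
    Tm z0 w - (starRingEnd ℂ) z0 = (z0.im : ℂ) * (2 * Complex.I) / (1 - w) := by
  have h1 : (1:ℂ) - w ≠ 0 := aux_one_sub_ne w hw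
  have hconj : (starRingEnd ℂ) z0 = (z0.re : ℂ) - z0.im * Complex.I := by
    apply Complex.ext <;> simp
  rw [Tm, hconj]
  field_simp
  ring

lemma Tm_sub_conj_ne (z0 w : ℂ) (h0 : 0 < z0.im) (hw : Complex.normSq w < 1) :
    Tm z0 w - (starRingEnd ℂ) z0 ≠ 0 := by
  rw [Tm_sub_conj z0 w hw]
  apply div_ne_zero _ (aux_one_sub_ne w hw)
  simp [Complex.ofReal_ne_zero, ne_of_gt h0, Complex.ext_iff]

lemma Tm_w (z0 w : ℂ) (hw : Complex.normSq w < 1) :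
    w * (Tm z0 w - (starRingEnd ℂ) z0) = Tm z0 w - z0 := by
  rw [Tm_sub_conj z0 w hw, Tm_sub z0 w hw]
  have h1 : (1:ℂ) - w ≠ 0 := aux_one_sub_ne w hw
  field_simp

lemma uu_Tm (z0 w : ℂ) (h0 : 0 < z0.im) (hw : Complex.normSq w < 1) :
    uu (Tm z0 w) z0 = Complex.normSq w / (1 - Complex.normSq w) := by
  have h1 : (1:ℂ) - w ≠ 0 := aux_one_sub_ne w hw
  have h2 : Complex.normSq (1 - w) ≠ 0 := (Complex.normSq_pos.2 h1).ne'
  have h3 : Complex.normSq (Tm z0 w - z0)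
      = z0.im ^ 2 * (4 * Complex.normSq w) / Complex.normSq (1 - w) := by
    rw [Tm_sub z0 w hw, map_div₀, map_mul, map_mul, Complex.normSq_ofReal]
    simp [Complex.normSq_mul, Complex.normSq_I]
    ring
  rw [uu, Complex.sq_norm, h3, Tm_im z0 w hw]
  have hy0 : z0.im ≠ 0 := ne_of_gt h0
  have h4 : (1:ℝ) - Complex.normSq w ≠ 0 := by linarith
  field_simp

lemma Tm_surj (z0 z : ℂ) (h0 : 0 < z0.im) (hz : 0 < z.im) :
    Complex.normSq ((z - z0) / (z - (starRingEnd ℂ) z0)) < 1 ∧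
      Tm z0 ((z - z0) / (z - (starRingEnd ℂ) z0)) = z := by
  have hden : z - (starRingEnd ℂ) z0 ≠ 0 := by
    intro h
    have := congrArg Complex.im h
    simp [Complex.sub_im, Complex.conj_im] at this
    linarith
  have hdnsq : 0 < Complex.normSq (z - (starRingEnd ℂ) z0) := Complex.normSq_pos.2 hden
  have hlt : Complex.normSq ((z - z0) / (z - (starRingEnd ℂ) z0)) < 1 := by
    rw [map_div₀, div_lt_one hdnsq, aux_normSq_sub_conj]
    nlinarith [hz, h0]
  refine ⟨hlt, ?_⟩
  set w := (z - z0) / (z - (starRingEnd ℂ) z0) with hwdef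
  have h1w : (1:ℂ) - w = ((z0 : ℂ) - (starRingEnd ℂ) z0) / (z - (starRingEnd ℂ) z0) := by
    rw [hwdef]
    field_simp
    ring
  have hz0c : (z0 : ℂ) - (starRingEnd ℂ) z0 = 2 * z0.im * Complex.I := by
    apply Complex.ext <;> simp <;> ring
  have hz0cne : (z0 : ℂ) - (starRingEnd ℂ) z0 ≠ 0 := by
    rw [hz0c]
    simp [Complex.ext_iff, ne_of_gt h0]
  have h1 : (1:ℂ) - w ≠ 0 := aux_one_sub_ne w hlt
  have hz0 : (z0.re : ℂ) + z0.im * Complex.I = z0 := Complex.re_add_im z0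
  have hy0C : ((z0.im : ℝ) : ℂ) ≠ 0 := Complex.ofReal_ne_zero.2 (ne_of_gt h0)
  have hsum : z0 + (starRingEnd ℂ) z0 = 2 * (z0.re : ℂ) := by
    rw [Complex.add_conj]; push_cast; ring
  have key : Complex.I * (1 + w) / (1 - w) = (z - (z0.re : ℂ)) / ((z0.im : ℝ) : ℂ) := by
    rw [div_eq_div_iff h1 hy0C, hwdef]
    field_simp
    linear_combination (-(Complex.I * ((z0.im : ℝ) : ℂ))) * hsum - (z - (z0.re : ℂ)) * hz0c
  rw [Tm, key]
  field_simp
  ring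

/-! ### polar-type parametrization -/

def gg (r : ℝ) : ℝ := Real.log (r / (1 + r)) / 2

def Gm (p : ℂ) : ℂ := ((gg p.re : ℝ) : ℂ) + (p.im : ℂ) * Complex.I

lemma gg_exp (r : ℝ) (hr : 0 < r) : Real.exp (gg r) = Real.sqrt (r / (1 + r)) := by
  have hpos : 0 < r / (1 + r) := div_pos hr (by linarith)
  rw [gg, Real.sqrt_eq_rpow, Real.rpow_def_of_pos hpos]
  ring_nf

lemma normSq_exp_Gm (p : ℂ) (hp : 0 < p.re) :
    Complex.normSq (Complex.exp (Gm p)) = p.re / (1 + p.re) := by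
  have h1 : (Gm p).re = gg p.re := by simp [Gm]
  rw [← Complex.sq_norm, Complex.norm_exp, h1, gg_exp _ hp,
    Real.sq_sqrt (le_of_lt (div_pos hp (by linarith)))]

lemma nu_lt_one (r : ℝ) (hr : 0 < r) : r / (1 + r) < 1 := by
  rw [div_lt_one (by linarith)]; linarith

lemma hasDerivAt_gg (r : ℝ) (hr : 0 < r) : HasDerivAt gg (1 / (2 * r * (1 + r))) r := by
  have h1r : (1 : ℝ) + r ≠ 0 := by positivity
  have hlog1 : HasDerivAt Real.log r⁻¹ r := Real.hasDerivAt_log (ne_of_gt hr)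
  have hlog2 : HasDerivAt (fun x : ℝ => Real.log (1 + x)) ((1 + r)⁻¹) r := by
    have h := (Real.hasDerivAt_log h1r).comp r ((hasDerivAt_id r).const_add 1)
    simpa [Function.comp_def] using h
  have heq : gg =ᶠ[nhds r] fun x => (Real.log x - Real.log (1 + x)) / 2 := by
    filter_upwards [isOpen_Ioi.eventually_mem hr] with x hx
    have hx' : (0:ℝ) < x := hx
    rw [gg, Real.log_div (ne_of_gt hx') (by positivity)]
  have h := ((hlog1.sub hlog2).div_const 2).congr_of_eventuallyEq heq
  refine h.congr_deriv ?_
  field_simp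
  ring

lemma hasDerivAt_HH (z0 q : ℂ) (hq : Complex.exp q ≠ 1) :
    HasDerivAt (fun q => Tm z0 (Complex.exp q))
      ((z0.im : ℂ) * (2 * Complex.I * Complex.exp q) / (1 - Complex.exp q) ^ 2) q := by
  have hne : (1 : ℂ) - Complex.exp q ≠ 0 := sub_ne_zero.2 (Ne.symm hq)
  have he : HasDerivAt Complex.exp (Complex.exp q) q := Complex.hasDerivAt_exp q
  have hnum : HasDerivAt (fun q => Complex.I * (1 + Complex.exp q))
      (Complex.I * Complex.exp q) q := by
    simpa using ((he.const_add 1).const_mul Complex.I)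
  have hden : HasDerivAt (fun q => (1 : ℂ) - Complex.exp q) (-Complex.exp q) q := by
    simpa using he.const_sub 1
  have h := ((hnum.div hden hne).const_mul ((z0.im : ℝ) : ℂ)).const_add ((z0.re : ℝ) : ℂ)
  have hfun : (fun q => Tm z0 (Complex.exp q)) =
      fun q => ((z0.re : ℝ) : ℂ) + ((z0.im : ℝ) : ℂ) *
        (Complex.I * (1 + Complex.exp q) / (1 - Complex.exp q)) := rfl
  rw [hfun]
  refine h.congr_deriv ?_
  ring

def DGm (r : ℝ) : ℂ →L[ℝ] ℂ :=
  Complex.ofRealCLM.comp ((1 / (2 * r * (1 + r))) • Complex.reCLM) +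
    Complex.imCLM.smulRight Complex.I

lemma hasFDerivAt_Gm (p : ℂ) (hp : 0 < p.re) : HasFDerivAt Gm (DGm p.re) p := by
  have h1 : HasFDerivAt (fun p : ℂ => ((gg p.re : ℝ) : ℂ))
      (Complex.ofRealCLM.comp ((1 / (2 * p.re * (1 + p.re))) • Complex.reCLM)) p :=
    Complex.ofRealCLM.hasFDerivAt.comp p
      ((hasDerivAt_gg p.re hp).comp_hasFDerivAt p Complex.reCLM.hasFDerivAt)
  have h2 : HasFDerivAt (fun p : ℂ => (p.im : ℂ) * Complex.I)
      (Complex.imCLM.smulRight Complex.I) p := by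
    have h := (Complex.imCLM.smulRight Complex.I).hasFDerivAt (x := p)
    convert h using 1
    ext q <;> simp [ContinuousLinearMap.smulRight_apply, Complex.real_smul]
  exact h1.add h2

def DPhi (z0 : ℂ) (p : ℂ) : ℂ →L[ℝ] ℂ :=
  ((ContinuousLinearMap.smulRight (1 : ℂ →L[ℂ] ℂ)
      ((z0.im : ℂ) * (2 * Complex.I * Complex.exp (Gm p)) /
        (1 - Complex.exp (Gm p)) ^ 2)).restrictScalars ℝ).comp (DGm p.re)

lemma hasFDerivAt_Phi (z0 p : ℂ) (hp : 0 < p.re) (hq : Complex.exp (Gm p) ≠ 1) :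
    HasFDerivAt (fun p => Tm z0 (Complex.exp (Gm p))) (DPhi z0 p) p :=
  (((hasDerivAt_HH z0 (Gm p) hq).hasFDerivAt).restrictScalars ℝ).comp p (hasFDerivAt_Gm p hp)

lemma aux_det_clm (T : ℂ →L[ℝ] ℂ) :
    T.det = (T 1).re * (T Complex.I).im - (T Complex.I).re * (T 1).im := by
  rw [ContinuousLinearMap.det]
  rw [← LinearMap.det_toMatrix Complex.basisOneI, Matrix.det_fin_two]
  simp [LinearMap.toMatrix_apply, Complex.coe_basisOneI_repr, Complex.coe_basisOneI]

lemma aux_det_comp (c : ℝ) (h' : ℂ) :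
    (((ContinuousLinearMap.smulRight (1 : ℂ →L[ℂ] ℂ) h').restrictScalars ℝ).comp
      (Complex.ofRealCLM.comp (c • Complex.reCLM) + Complex.imCLM.smulRight Complex.I)).det
      = Complex.normSq h' * c := by
  set T := (((ContinuousLinearMap.smulRight (1 : ℂ →L[ℂ] ℂ) h').restrictScalars ℝ).comp
      (Complex.ofRealCLM.comp (c • Complex.reCLM) + Complex.imCLM.smulRight Complex.I)) with hT
  have hT1 : T 1 = (c : ℂ) * h' := by
    simp [hT, ContinuousLinearMap.smulRight_apply, Complex.real_smul, smul_eq_mul]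
  have hTI : T Complex.I = Complex.I * h' := by
    simp [hT, ContinuousLinearMap.smulRight_apply, Complex.real_smul, smul_eq_mul]
  rw [aux_det_clm, hT1, hTI]
  simp only [Complex.mul_re, Complex.mul_im, Complex.ofReal_re, Complex.ofReal_im,
    Complex.I_re, Complex.I_im, Complex.normSq_apply]
  ring

lemma det_DPhi (z0 p : ℂ) :
    (DPhi z0 p).det =
      Complex.normSq ((z0.im : ℂ) * (2 * Complex.I * Complex.exp (Gm p)) /
        (1 - Complex.exp (Gm p)) ^ 2) * (1 / (2 * p.re * (1 + p.re))) :=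
  aux_det_comp _ _

def Sset : Set ℂ := {p : ℂ | 0 < p.re ∧ p.im ∈ Set.Ioo 0 (2 * Real.pi)}

lemma Sset_open : IsOpen Sset := by
  have : Sset = {p : ℂ | 0 < p.re} ∩ ({p : ℂ | 0 < p.im} ∩ {p : ℂ | p.im < 2 * Real.pi}) := by
    ext p
    simp [Sset, Set.mem_Ioo, and_assoc]
  rw [this]
  exact (isOpen_lt continuous_const Complex.continuous_re).inter
    ((isOpen_lt continuous_const Complex.continuous_im).inter
      (isOpen_lt Complex.continuous_im continuous_const))

lemma exp_Gm_lt_one (p : ℂ) (hp : 0 < p.re) : Complex.normSq (Complex.exp (Gm p)) < 1 := by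
  rw [normSq_exp_Gm p hp]
  exact nu_lt_one p.re hp

lemma exp_Gm_ne_one (p : ℂ) (hp : 0 < p.re) : Complex.exp (Gm p) ≠ 1 := by
  intro h
  have := exp_Gm_lt_one p hp
  rw [h] at this
  simp at this

lemma phi_inj (z0 : ℂ) (h0 : 0 < z0.im) :
    Set.InjOn (fun p => Tm z0 (Complex.exp (Gm p))) Sset := by
  intro p1 hp1 p2 hp2 heq
  simp only at heq
  have hw1 : Complex.normSq (Complex.exp (Gm p1)) < 1 := exp_Gm_lt_one p1 hp1.1
  have hw2 : Complex.normSq (Complex.exp (Gm p2)) < 1 := exp_Gm_lt_one p2 hp2.1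
  have he : Complex.exp (Gm p1) = Complex.exp (Gm p2) := by
    have h1 := Tm_w z0 (Complex.exp (Gm p1)) hw1
    have h2 := Tm_w z0 (Complex.exp (Gm p2)) hw2
    rw [heq] at h1
    rw [← h2] at h1
    exact mul_right_cancel₀ (Tm_sub_conj_ne z0 (Complex.exp (Gm p2)) h0 hw2) h1
  obtain ⟨n, hn⟩ := Complex.exp_eq_exp_iff_exists_int.1 he
  have hre := congrArg Complex.re hn
  have him := congrArg Complex.im hn
  simp only [Gm, Complex.add_re, Complex.add_im, Complex.mul_re, Complex.mul_im,
    Complex.ofReal_re, Complex.ofReal_im, Complex.I_re, Complex.I_im, Complex.intCast_re,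
    Complex.intCast_im, Complex.re_ofNat, Complex.im_ofNat, Complex.ofReal_zero,
    mul_zero, mul_one, zero_mul, sub_zero, add_zero, zero_add] at hre him
  -- hre : gg p1.re = gg p2.re + junk0 ; him : p1.im = p2.im + n * (2π)
  have hrr : p1.re = p2.re := by
    have hgg : gg p1.re = gg p2.re := by linarith [hre]
    have h1 := gg_exp p1.re hp1.1
    have h2 := gg_exp p2.re hp2.1
    have hs : Real.sqrt (p1.re / (1 + p1.re)) = Real.sqrt (p2.re / (1 + p2.re)) := by
      rw [← h1, ← h2, hgg]
    have hq1 : (0:ℝ) ≤ p1.re / (1 + p1.re) := le_of_lt (div_pos hp1.1 (by linarith [hp1.1]))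
    have hq2 : (0:ℝ) ≤ p2.re / (1 + p2.re) := le_of_lt (div_pos hp2.1 (by linarith [hp2.1]))
    have hsq : p1.re / (1 + p1.re) = p2.re / (1 + p2.re) := by
      have := congrArg (fun t : ℝ => t ^ 2) hs
      simpa [Real.sq_sqrt hq1, Real.sq_sqrt hq2] using this
    have hne1 : (1:ℝ) + p1.re ≠ 0 := by linarith [hp1.1]
    have hne2 : (1:ℝ) + p2.re ≠ 0 := by linarith [hp2.1]
    field_simp at hsq
    linarith
  have hπ : 0 < Real.pi := Real.pi_pos
  have hnn : (n : ℝ) = 0 := by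
    rcases lt_trichotomy n 0 with hlt | hzero | hgt
    · have : (n : ℝ) ≤ -1 := by exact_mod_cast (by omega : n ≤ -1)
      nlinarith [hp1.2.1, hp1.2.2, hp2.2.1, hp2.2.2, him]
    · simp [hzero]
    · have : (1:ℝ) ≤ (n : ℝ) := by exact_mod_cast hgt
      nlinarith [hp1.2.1, hp1.2.2, hp2.2.1, hp2.2.2, him]
  have hii : p1.im = p2.im := by
    rw [hnn] at him
    linarith [him]
  exact Complex.ext hrr hii

lemma phi_surj (z0 : ℂ) (h0 : 0 < z0.im) (z : ℂ) (hz : 0 < z.im) (hre : z.re ≠ z0.re) :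
    z ∈ (fun p => Tm z0 (Complex.exp (Gm p))) '' Sset := by
  obtain ⟨hlt, hTz⟩ := Tm_surj z0 z h0 hz
  set w := (z - z0) / (z - (starRingEnd ℂ) z0) with hwdef
  have hden : z - (starRingEnd ℂ) z0 ≠ 0 := by
    intro h
    have := congrArg Complex.im h
    simp [Complex.sub_im, Complex.conj_im] at this
    linarith
  have hw0 : w ≠ 0 := by
    rw [hwdef]
    apply div_ne_zero _ hden
    intro h
    have := congrArg Complex.re h
    simp [Complex.sub_re] at this
    exact hre (by linarith)
  have hrel : w * (z - (starRingEnd ℂ) z0) = z - z0 := by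
    rw [hwdef]; field_simp
  have hwim : w.im ≠ 0 := by
    intro hzero
    have hr2 := congrArg Complex.re hrel
    have hi2 := congrArg Complex.im hrel
    rw [Complex.mul_re] at hr2
    rw [Complex.mul_im] at hi2
    rw [hzero] at hr2 hi2
    simp only [Complex.sub_re, Complex.sub_im, Complex.conj_re, Complex.conj_im,
      zero_mul, mul_zero, sub_zero, add_zero, zero_add] at hr2 hi2
    have hd : z.re - z0.re ≠ 0 := sub_ne_zero.2 hre
    have hwre : w.re = 1 := by
      have h1 : (w.re - 1) * (z.re - z0.re) = 0 := by linear_combination hr2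
      rcases mul_eq_zero.1 h1 with h | h
      · linarith
      · exact absurd h hd
    rw [hwre, one_mul] at hi2
    linarith
  set θ := if 0 < w.im then Complex.arg w else Complex.arg w + 2 * Real.pi with hθdef
  have hπ : 0 < Real.pi := Real.pi_pos
  have hθmem : θ ∈ Set.Ioo 0 (2 * Real.pi) := by
    rw [hθdef]
    split_ifs with hpos
    · constructor
      · rcases lt_or_eq_of_le (Complex.arg_nonneg_iff.2 (le_of_lt hpos)) with h | h
        · exact h
        · exfalso
          have := Complex.arg_eq_zero_iff.1 h.symm
          exact (ne_of_gt hpos) this.2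
      · have := Complex.arg_le_pi w
        linarith
    · have hneg : w.im < 0 := by
        rcases lt_trichotomy w.im 0 with h | h | h
        · exact h
        · exact absurd h hwim
        · exact absurd h hpos
      have h1 : Complex.arg w < 0 := Complex.arg_neg_iff.2 hneg
      have h2 : -Real.pi < Complex.arg w := Complex.neg_pi_lt_arg w
      constructor <;> [linarith; linarith]
  set ν := Complex.normSq w with hνdef
  have hν0 : 0 < ν := Complex.normSq_pos.2 hw0
  have hν1 : ν < 1 := hlt
  set r := ν / (1 - ν) with hrdef
  have hr : 0 < r := div_pos hν0 (by linarith)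
  set p := (r : ℂ) + (θ : ℂ) * Complex.I with hpdef
  have hpre : p.re = r := by simp [hpdef]
  have hpim : p.im = θ := by simp [hpdef]
  refine ⟨p, ⟨by rw [hpre]; exact hr, by rw [hpim]; exact hθmem⟩, ?_⟩
  have hνr : r / (1 + r) = ν := by
    rw [hrdef]
    have h1 : (1:ℝ) - ν ≠ 0 := by linarith
    field_simp
    ring
  have habs : Real.exp (gg r) = ‖w‖ := by
    rw [gg_exp r hr, hνr, hνdef, Complex.norm_def]
  have hexpθ : Complex.exp ((θ : ℂ) * Complex.I) = Complex.exp ((Complex.arg w : ℂ) * Complex.I) := by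
    rw [hθdef]
    split_ifs
    · rfl
    · push_cast
      rw [add_mul, Complex.exp_add, Complex.exp_two_pi_mul_I, mul_one]
  have hexp : Complex.exp (Gm p) = w := by
    rw [Gm, hpre, hpim, Complex.exp_add, hexpθ, ← Complex.ofReal_exp, habs,
      Complex.norm_mul_exp_arg_mul_I]
  simp only [hexp]
  exact hTz

lemma line_null (x0 : ℝ) : volume {z : ℂ | z.re = x0} = 0 := by
  have hset : {z : ℂ | z.re = x0} =
      Complex.measurableEquivRealProd ⁻¹' ({x0} ×ˢ (Set.univ : Set ℝ)) := by
    ext z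
    simp [Complex.measurableEquivRealProd_apply, Set.mem_prod, eq_comm]
  rw [hset, Complex.volume_preserving_equiv_real_prod.measure_preimage
    (((measurableSet_singleton _).prod MeasurableSet.univ).nullMeasurableSet)]
  rw [MeasureTheory.Measure.volume_eq_prod, MeasureTheory.Measure.prod_prod]
  simp

lemma integrand_eq (z0 : ℂ) (h0 : 0 < z0.im) (f : ℝ → ℝ) (p : ℂ) (hp : p ∈ Sset) :
    |(DPhi z0 p).det| • (f (uu (Tm z0 (Complex.exp (Gm p))) z0) /
      (Tm z0 (Complex.exp (Gm p))).im ^ 2) = 2 * f p.re := by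
  have hr : 0 < p.re := hp.1
  have hν : Complex.normSq (Complex.exp (Gm p)) = p.re / (1 + p.re) := normSq_exp_Gm p hr
  have hν1 : Complex.normSq (Complex.exp (Gm p)) < 1 := exp_Gm_lt_one p hr
  have h1w : (1:ℂ) - Complex.exp (Gm p) ≠ 0 := aux_one_sub_ne _ hν1
  have hnz : 0 < Complex.normSq (1 - Complex.exp (Gm p)) := Complex.normSq_pos.2 h1w
  have h1p : (0:ℝ) < 1 + p.re := by linarith
  have huu : uu (Tm z0 (Complex.exp (Gm p))) z0 = p.re := by
    rw [uu_Tm z0 _ h0 hν1, hν]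
    have h2 : (1:ℝ) + p.re ≠ 0 := ne_of_gt h1p
    rw [show (1:ℝ) - p.re / (1 + p.re) = 1 / (1 + p.re) by field_simp; ring]
    field_simp
  have hnsq : Complex.normSq ((z0.im : ℂ) * (2 * Complex.I * Complex.exp (Gm p)) /
      (1 - Complex.exp (Gm p)) ^ 2)
      = z0.im ^ 2 * (4 * Complex.normSq (Complex.exp (Gm p))) /
          Complex.normSq (1 - Complex.exp (Gm p)) ^ 2 := by
    rw [map_div₀, map_pow, map_mul, map_mul, map_mul, Complex.normSq_ofReal, Complex.normSq_I]
    rw [show Complex.normSq 2 = 4 by rw [Complex.normSq_apply]; norm_num]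
    ring
  rw [huu, det_DPhi, Tm_im z0 _ hν1, hnsq, hν]
  have hy0 : z0.im ≠ 0 := ne_of_gt h0
  have hνpos : (0:ℝ) ≤ p.re / (1 + p.re) := le_of_lt (div_pos hr h1p)
  have hνlt : p.re / (1 + p.re) < 1 := nu_lt_one p.re hr
  have hge : (0:ℝ) ≤ z0.im ^ 2 * (4 * (p.re / (1 + p.re))) /
      Complex.normSq (1 - Complex.exp (Gm p)) ^ 2 * (1 / (2 * p.re * (1 + p.re))) :=
    mul_nonneg (div_nonneg (mul_nonneg (sq_nonneg _) (by linarith)) (sq_nonneg _))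
      (le_of_lt (by positivity))
  rw [abs_of_nonneg hge, smul_eq_mul]
  have hnzne : Complex.normSq (1 - Complex.exp (Gm p)) ≠ 0 := ne_of_gt hnz
  have h1ν : (0:ℝ) < 1 - p.re / (1 + p.re) := by linarith
  field_simp
  ring

lemma fubini_Sset (f : ℝ → ℝ) :
    (∫ p in Sset, 2 * f p.re) = 4 * Real.pi * ∫ r in Set.Ioi (0:ℝ), f r := by
  have hSet : Sset = Complex.measurableEquivRealProd ⁻¹'
      (Set.Ioi (0:ℝ) ×ˢ Set.Ioo (0:ℝ) (2 * Real.pi)) := by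
    ext p
    simp [Sset, Complex.measurableEquivRealProd_apply, Set.mem_prod]
  rw [hSet]
  have h1 := Complex.volume_preserving_equiv_real_prod.setIntegral_preimage_emb
      Complex.measurableEquivRealProd.measurableEmbedding
      (fun q : ℝ × ℝ => 2 * f q.1) (Set.Ioi (0:ℝ) ×ˢ Set.Ioo (0:ℝ) (2 * Real.pi))
  rw [show (fun p : ℂ => 2 * f p.re) =
      (fun p : ℂ => 2 * f (Complex.measurableEquivRealProd p).1) from rfl] at *
  rw [h1]
  rw [MeasureTheory.Measure.volume_eq_prod]
  have h2 : (∫ q in (Set.Ioi (0:ℝ) ×ˢ Set.Ioo (0:ℝ) (2 * Real.pi)), 2 * f q.1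
        ∂((volume : Measure ℝ).prod (volume : Measure ℝ)))
      = (∫ r in Set.Ioi (0:ℝ), 2 * f r) * ∫ _ in Set.Ioo (0:ℝ) (2 * Real.pi), (1:ℝ) := by
    rw [← MeasureTheory.setIntegral_prod_mul (fun r : ℝ => 2 * f r) (fun _ : ℝ => (1:ℝ))]
    simp
  rw [h2]
  rw [MeasureTheory.setIntegral_const, measureReal_def, Real.volume_Ioo, smul_eq_mul]
  rw [ENNReal.toReal_ofReal (by nlinarith [Real.pi_pos] : (0:ℝ) ≤ 2 * Real.pi - 0)]
  rw [MeasureTheory.integral_const_mul]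
  ring

lemma integral_pointpair (f : ℝ → ℝ) (z0 : ℂ) (h0 : 0 < z0.im) :
    (∫ z in {z : ℂ | 0 < z.im}, f (uu z z0) / z.im ^ 2)
      = 4 * Real.pi * ∫ r in Set.Ioi (0:ℝ), f r := by
  have hS : MeasurableSet Sset := Sset_open.measurableSet
  set Φ := fun p => Tm z0 (Complex.exp (Gm p)) with hΦ
  have hsub : Φ '' Sset ⊆ {z : ℂ | 0 < z.im} := by
    rintro - ⟨p, hp, rfl⟩
    exact Tm_im_pos z0 _ h0 (exp_Gm_lt_one p hp.1)
  have hae : Φ '' Sset =ᵐ[volume] {z : ℂ | 0 < z.im} := by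
    refine (MeasureTheory.ae_eq_set).2 ⟨?_, ?_⟩
    · rw [Set.diff_eq_empty.2 hsub]
      exact measure_empty
    · apply measure_mono_null _ (line_null z0.re)
      rintro z ⟨hz1, hz2⟩
      show z.re = z0.re
      by_contra hzre
      exact hz2 (phi_surj z0 h0 z hz1 hzre)
  have hderiv : ∀ p ∈ Sset, HasFDerivWithinAt Φ (DPhi z0 p) Sset p := fun p hp =>
    (hasFDerivAt_Phi z0 p hp.1 (exp_Gm_ne_one p hp.1)).hasFDerivWithinAt
  calc (∫ z in {z : ℂ | 0 < z.im}, f (uu z z0) / z.im ^ 2)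
      = ∫ z in Φ '' Sset, f (uu z z0) / z.im ^ 2 :=
        (MeasureTheory.setIntegral_congr_set hae).symm
    _ = ∫ p in Sset, |(DPhi z0 p).det| • (f (uu (Φ p) z0) / (Φ p).im ^ 2) :=
        MeasureTheory.integral_image_eq_integral_abs_det_fderiv_smul volume hS hderiv
          (phi_inj z0 h0) _
    _ = ∫ p in Sset, 2 * f p.re :=
        MeasureTheory.setIntegral_congr_fun hS (fun p hp => integrand_eq z0 h0 f p hp)
    _ = 4 * Real.pi * ∫ r in Set.Ioi (0:ℝ), f r := fubini_Sset f

lemma uu_moebR (g : Matrix (Fin 2) (Fin 2) ℝ) (hdet : g.det = 1) (hell : g.trace ^ 2 < 4)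
    (z0 : ℂ) (h0 : 0 < z0.im) (hfix : moebR g z0 = z0) (z : ℂ) (hz : 0 < z.im) :
    uu z (moebR g z) = (4 - g.trace ^ 2) * uu z z0 * (1 + uu z z0) := by
  rw [Matrix.det_fin_two] at hdet
  rw [Matrix.trace_fin_two] at hell ⊢
  set a := g 0 0 with ha
  set b := g 0 1 with hb
  set c := g 1 0 with hc
  set d := g 1 1 with hd
  have hy0 : z0.im ≠ 0 := ne_of_gt h0
  have hy : z.im ≠ 0 := ne_of_gt hz
  -- c ≠ 0
  have hcne : c ≠ 0 := by
    intro hc0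
    have hdne : d ≠ 0 := by intro h; rw [hc0, h] at hdet; simp at hdet
    have hfix' := hfix
    rw [moebR, ← hc, ← hd, ← ha, ← hb, hc0] at hfix'
    have hDne : ((0:ℝ):ℂ) * z0 + (d:ℂ) ≠ 0 := by
      simpa using Complex.ofReal_ne_zero.2 hdne
    rw [div_eq_iff hDne] at hfix'
    have him := congrArg Complex.im hfix'
    simp only [Complex.add_im, Complex.mul_im, Complex.ofReal_re, Complex.ofReal_im,
      Complex.zero_im, Complex.zero_re] at him
    -- him : a * z0.im + ... = ...
    have had : a = d := by
      simp at him
      nlinarith [him, h0]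
    rw [had] at hell
    rw [hc0, had] at hdet
    nlinarith [hell, hdet]
  -- fixed point equation
  have hDz0 : (c:ℂ) * z0 + (d:ℂ) ≠ 0 := by
    intro h
    have := congrArg Complex.im h
    simp [Complex.add_im, Complex.mul_im] at this
    exact hcne (by simpa [hy0] using this)
  have hfixeq : (a:ℂ) * z0 + (b:ℂ) = z0 * ((c:ℂ) * z0 + (d:ℂ)) := by
    rw [moebR, ← hc, ← hd, ← ha, ← hb, div_eq_iff hDz0] at hfix
    exact hfix
  -- real identities
  have hre := congrArg Complex.re hfixeq
  have him := congrArg Complex.im hfixeq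
  simp only [Complex.add_re, Complex.add_im, Complex.mul_re, Complex.mul_im,
    Complex.ofReal_re, Complex.ofReal_im] at hre him
  have h1 : 2 * c * z0.re = a - d := by
    -- from him
    have : a * z0.im = z0.re * (c * z0.im) + z0.im * (c * z0.re + d) := by linarith [him]
    field_simp at this ⊢
    nlinarith [this, hy0]
  have h2 : b = -(c * (z0.re ^ 2 + z0.im ^ 2)) := by
    linear_combination hre + z0.re * h1
  have h3 : 4 - (a + d) ^ 2 = 4 * c ^ 2 * z0.im ^ 2 := by
    linear_combination (-4) * hdet + (a - d + 2*c*z0.re) * h1 + (-4*c) * h2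
  -- complex identities
  have h1C : ((2*c*z0.re : ℝ) : ℂ) = ((a - d : ℝ) : ℂ) := by exact_mod_cast h1
  have hc1 : (c:ℂ) * (z0 + (starRingEnd ℂ) z0) = (a:ℂ) - (d:ℂ) := by
    rw [Complex.add_conj]
    push_cast at h1C ⊢
    linear_combination h1C
  have hc2 : (c:ℂ) * (z0 * (starRingEnd ℂ) z0) = -(b:ℂ) := by
    rw [Complex.mul_conj]
    rw [show Complex.normSq z0 = z0.re ^ 2 + z0.im ^ 2 by rw [Complex.normSq_apply]; ring]
    push_cast [h2]
    ring
  -- denominator at z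
  have hD : (c:ℂ) * z + (d:ℂ) ≠ 0 := by
    intro h
    have := congrArg Complex.im h
    simp [Complex.add_im, Complex.mul_im] at this
    exact hcne (by simpa [hy] using this)
  have hnsqD : Complex.normSq ((c:ℂ) * z + (d:ℂ)) ≠ 0 := by
    simpa [Complex.normSq_eq_zero] using hD
  -- imaginary part of the image
  have him2 : (moebR g z).im = z.im / Complex.normSq ((c:ℂ) * z + (d:ℂ)) := by
    rw [moebR, ← hc, ← hd, ← ha, ← hb, Complex.div_im, div_sub_div_same]
    congr 1
    simp only [Complex.add_im, Complex.add_re, Complex.mul_im, Complex.mul_re,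
      Complex.ofReal_re, Complex.ofReal_im]
    nlinarith [hdet]
  -- difference
  have hsub : z - moebR g z =
      ((c:ℂ) * (z - z0) * (z - (starRingEnd ℂ) z0)) / ((c:ℂ) * z + (d:ℂ)) := by
    rw [moebR, ← hc, ← hd, ← ha, ← hb]
    rw [eq_div_iff hD, sub_mul, div_mul_cancel₀ _ hD]
    linear_combination z * hc1 - hc2
  have hnsq1 : Complex.normSq (z - moebR g z) =
      c^2 * Complex.normSq (z - z0) * Complex.normSq (z - (starRingEnd ℂ) z0)
        / Complex.normSq ((c:ℂ) * z + (d:ℂ)) := by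
    rw [hsub]
    rw [map_div₀, map_mul, map_mul, Complex.normSq_ofReal]
    ring
  have hkey := aux_normSq_sub_conj z z0
  rw [uu, uu, Complex.sq_norm, Complex.sq_norm, hnsq1, him2, h3]
  have hAB : Complex.normSq (z - (starRingEnd ℂ) z0) = Complex.normSq (z - z0) + 4*z.im*z0.im :=
    hkey
  field_simp
  rw [mul_div_cancel_right₀ _ (by rwa [mul_comm] at hnsqD)]
  linear_combination Complex.normSq (z - z0) * hAB


theorem stmt6 :
    ∃ E : ℝ, 0 < E ∧
      ∀ g1 g2 : Matrix (Fin 2) (Fin 2) ℝ,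
        g1.det = 1 → g2.det = 1 →
        (g1.trace) ^ 2 < 4 → (g2.trace) ^ 2 < 4 →
        ∀ z0 : ℂ, 0 < z0.im → moebR g1 z0 = z0 → moebR g2 z0 = z0 →
        ∀ m1 ∈ KE E, ∀ m2 ∈ KE E,
          (∫ z in {z : ℂ | 0 < z.im},
              m1 (uu z (moebR g1 z)) * m2 (uu z (moebR g2 z)) / z.im ^ 2)
            = 4 * Real.pi * ∫ r in Set.Ioi (0 : ℝ),
                m1 ((4 - g1.trace ^ 2) * r * (1 + r)) *
                  m2 ((4 - g2.trace ^ 2) * r * (1 + r)) := by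
  refine ⟨1, one_pos, ?_⟩
  intro g1 g2 hdet1 hdet2 hell1 hell2 z0 h0 hfix1 hfix2 m1 _hm1 m2 _hm2
  have hmeas : MeasurableSet {z : ℂ | 0 < z.im} :=
    (isOpen_lt continuous_const Complex.continuous_im).measurableSet
  have hrw : Set.EqOn
      (fun z : ℂ => m1 (uu z (moebR g1 z)) * m2 (uu z (moebR g2 z)) / z.im ^ 2)
      (fun z : ℂ => (fun r : ℝ => m1 ((4 - g1.trace ^ 2) * r * (1 + r)) *
          m2 ((4 - g2.trace ^ 2) * r * (1 + r))) (uu z z0) / z.im ^ 2)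
      {z : ℂ | 0 < z.im} := by
    intro z hz
    simp only
    rw [uu_moebR g1 hdet1 hell1 z0 h0 hfix1 z hz, uu_moebR g2 hdet2 hell2 z0 h0 hfix2 z hz]
  rw [MeasureTheory.setIntegral_congr_fun hmeas hrw]
  exact integral_pointpair (fun r : ℝ => m1 ((4 - g1.trace ^ 2) * r * (1 + r)) *
    m2 ((4 - g2.trace ^ 2) * r * (1 + r))) z0 h0

end
end

section
/- Let τ₁ ∈ (−2,2) and X ∈ ℝ. If γ = (a b; c d) ∈ SL₂(ℝ) satisfies a + d = τ₁ and γ(X+i) = X+i, then there is ε ∈ {−1, 1} such that a = τ₁/2 + (εX/2)√(4−τ₁²), b = −(ε/2)√(4−τ₁²)·(X²+1), c = (ε/2)√(4−τ₁²), and d = τ₁/2 − (εX/2)√(4−τ₁²). -/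
noncomputable section

theorem stmt9 (τ1 X a b c d : ℝ) (hτ1 : -2 < τ1) (hτ2 : τ1 < 2)
    (hdet : a * d - b * c = 1) (htr : a + d = τ1)
    (hfix : moebR !![a, b; c, d] ((X : ℂ) + Complex.I) = (X : ℂ) + Complex.I) :
    ∃ ε : ℝ, (ε = -1 ∨ ε = 1) ∧
      a = τ1 / 2 + (ε * X / 2) * Real.sqrt (4 - τ1 ^ 2) ∧
      b = -(ε / 2) * Real.sqrt (4 - τ1 ^ 2) * (X ^ 2 + 1) ∧
      c = (ε / 2) * Real.sqrt (4 - τ1 ^ 2) ∧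
      d = τ1 / 2 - (ε * X / 2) * Real.sqrt (4 - τ1 ^ 2) := by
  set s := Real.sqrt (4 - τ1 ^ 2) with hs_def
  have h4 : (0:ℝ) < 4 - τ1 ^ 2 := by nlinarith
  have hs2 : s ^ 2 = 4 - τ1 ^ 2 := Real.sq_sqrt h4.le
  have hspos : 0 < s := Real.sqrt_pos.mpr h4
  simp only [moebR, show !![a, b; c, d] 0 0 = a from rfl, show !![a, b; c, d] 0 1 = b from rfl,
    show !![a, b; c, d] 1 0 = c from rfl, show !![a, b; c, d] 1 1 = d from rfl] at hfix
  have hden : (c : ℂ) * ((X : ℂ) + Complex.I) + (d : ℂ) ≠ 0 := by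
    intro h
    have him := congrArg Complex.im h
    have hre := congrArg Complex.re h
    simp [Complex.add_im, Complex.mul_im, Complex.add_re, Complex.mul_re] at him hre
    rw [him] at hre
    simp at hre
    rw [him, hre] at hdet
    simp at hdet
  rw [div_eq_iff hden] at hfix
  have him := congrArg Complex.im hfix
  have hre := congrArg Complex.re hfix
  simp [Complex.add_im, Complex.mul_im, Complex.add_re, Complex.mul_re, Complex.I_re,
    Complex.I_im] at him hre
  -- him : a = X * c + (c * X + d)  i.e. a = 2cX + d
  -- hre : a * X + b = X * (c*X + d) - c
  have h1 : a - d = 2 * c * X := by linarith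
  have h2 : b = -c * (X ^ 2 + 1) := by linear_combination hre - X * him
  have ha : a = τ1 / 2 + c * X := by linarith
  have hd : d = τ1 / 2 - c * X := by linarith
  have hc2 : c ^ 2 = (4 - τ1 ^ 2) / 4 := by
    rw [ha, hd, h2] at hdet; linear_combination hdet
  have hcne : c ≠ 0 := by
    intro h; rw [h] at hc2; simp at hc2; nlinarith
  refine ⟨2 * c / s, ?_, ?_, ?_, ?_, ?_⟩
  · have hq : (2 * c / s) * (2 * c / s) = 1 := by
      field_simp
      nlinarith
    rcases mul_self_eq_one_iff.mp hq with h | h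
    · exact Or.inr h
    · exact Or.inl h
  · rw [ha]; field_simp
  · rw [h2]; field_simp
  · field_simp
  · rw [hd]; field_simp
end
end

section
/- Let X be a nonzero real number and let r₁, r₂ ≥ 0. There exist x ∈ ℝ and y > 0 with r₁ = ((X−x)² + (y−1)²)/(4y) and r₂ = ((X+x)² + (y−1)²)/(4y) if and only if 2X²(2r₁r₂ + r₁ + r₂) − X⁴ − (r₂−r₁)² ≥ 0; moreover, any such pair (x,y) satisfies x = ((r₂−r₁)/X)·y and y = (1 + r₁ + r₂ ± (1/X)√(2X²(2r₁r₂ + r₁ + r₂) − X⁴ − (r₂−r₁)²)) / (1 + ((r₂−r₁)/X)²) for one of the two choices of sign. -/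
theorem stmt10 (X : ℝ) (hX : X ≠ 0) (r1 r2 : ℝ) (h1 : 0 ≤ r1) (h2 : 0 ≤ r2) :
    ((∃ x y : ℝ, 0 < y ∧ r1 = ((X - x) ^ 2 + (y - 1) ^ 2) / (4 * y) ∧
        r2 = ((X + x) ^ 2 + (y - 1) ^ 2) / (4 * y)) ↔
      0 ≤ 2 * X ^ 2 * (2 * r1 * r2 + r1 + r2) - X ^ 4 - (r2 - r1) ^ 2) ∧
    (∀ x y : ℝ, 0 < y → r1 = ((X - x) ^ 2 + (y - 1) ^ 2) / (4 * y) →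
      r2 = ((X + x) ^ 2 + (y - 1) ^ 2) / (4 * y) →
      x = ((r2 - r1) / X) * y ∧
      ∃ s : ℝ, (s = 1 ∨ s = -1) ∧
        y = (1 + r1 + r2 + s * (1 / X) *
              Real.sqrt (2 * X ^ 2 * (2 * r1 * r2 + r1 + r2) - X ^ 4 - (r2 - r1) ^ 2)) /
            (1 + ((r2 - r1) / X) ^ 2)) := by
  have hX2 : X ^ 2 ≠ 0 := pow_ne_zero 2 hX
  constructor
  · constructor
    · rintro ⟨x, y, hy, e1, e2⟩
      have hy' : y ≠ 0 := ne_of_gt hy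
      have hEeq : 2 * X ^ 2 * (2 * r1 * r2 + r1 + r2) - X ^ 4 - (r2 - r1) ^ 2
          = (X * (x ^ 2 + y ^ 2 - X ^ 2 - 1)) ^ 2 / (4 * y ^ 2) := by
        rw [e1, e2]; field_simp; ring
      rw [hEeq]; positivity
    · intro hE
      have hD : (0:ℝ) ≤ (2 * X ^ 2 * (2 * r1 * r2 + r1 + r2) - X ^ 4 - (r2 - r1) ^ 2) / X ^ 2 := by
        positivity
      obtain ⟨y, hydef⟩ : ∃ y : ℝ, y = (1 + r1 + r2 +
          Real.sqrt ((2 * X ^ 2 * (2 * r1 * r2 + r1 + r2) - X ^ 4 - (r2 - r1) ^ 2) / X ^ 2)) /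
          (1 + ((r2 - r1) / X) ^ 2) := ⟨_, rfl⟩
      obtain ⟨x, hxdef⟩ : ∃ x : ℝ, x = ((r2 - r1) / X) * y := ⟨_, rfl⟩
      have hsq : Real.sqrt ((2 * X ^ 2 * (2 * r1 * r2 + r1 + r2) - X ^ 4 - (r2 - r1) ^ 2) / X ^ 2)
          ^ 2 = (2 * X ^ 2 * (2 * r1 * r2 + r1 + r2) - X ^ 4 - (r2 - r1) ^ 2) / X ^ 2 :=
        Real.sq_sqrt hD
      have hy : 0 < y := by
        rw [hydef]
        apply div_pos _ (by positivity)
        have := Real.sqrt_nonneg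
          ((2 * X ^ 2 * (2 * r1 * r2 + r1 + r2) - X ^ 4 - (r2 - r1) ^ 2) / X ^ 2)
        nlinarith
      have hy' : y ≠ 0 := ne_of_gt hy
      have hxx : X * x = (r2 - r1) * y := by rw [hxdef]; field_simp
      have hax2 : X ^ 2 * x ^ 2 = (r2 - r1) ^ 2 * y ^ 2 := by
        have := congrArg (· ^ 2) hxx
        simpa [mul_pow] using this
      have hy0X : (X ^ 2 + (r2 - r1) ^ 2) * y - (1 + r1 + r2) * X ^ 2 = X ^ 2 *
          Real.sqrt ((2 * X ^ 2 * (2 * r1 * r2 + r1 + r2) - X ^ 4 - (r2 - r1) ^ 2) / X ^ 2) := by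
        rw [hydef]; field_simp; ring
      have h5 : ((X ^ 2 + (r2 - r1) ^ 2) * y - (1 + r1 + r2) * X ^ 2) ^ 2 =
          X ^ 4 * ((2 * X ^ 2 * (2 * r1 * r2 + r1 + r2) - X ^ 4 - (r2 - r1) ^ 2) / X ^ 2) := by
        rw [hy0X, mul_pow, hsq]; ring
      have hDid : (1 + r1 + r2) ^ 2 * X ^ 4 - (X ^ 2 + (r2 - r1) ^ 2) * (1 + X ^ 2) * X ^ 2
          = X ^ 4 * ((2 * X ^ 2 * (2 * r1 * r2 + r1 + r2) - X ^ 4 - (r2 - r1) ^ 2) / X ^ 2) := by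
        field_simp; ring
      have hq : (X ^ 2 + (r2 - r1) ^ 2) *
          ((X ^ 2 + (r2 - r1) ^ 2) * y ^ 2 - 2 * (1 + r1 + r2) * X ^ 2 * y
            + (1 + X ^ 2) * X ^ 2) = 0 := by
        linear_combination h5 - hDid
      have hcpos : (0:ℝ) < X ^ 2 + (r2 - r1) ^ 2 := by positivity
      have hq' : (X ^ 2 + (r2 - r1) ^ 2) * y ^ 2 - 2 * (1 + r1 + r2) * X ^ 2 * y
          + (1 + X ^ 2) * X ^ 2 = 0 :=
        (mul_eq_zero.mp hq).resolve_left (ne_of_gt hcpos)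
      refine ⟨x, y, hy, ?_, ?_⟩
      · rw [eq_div_iff (by positivity : (4:ℝ) * y ≠ 0)]
        apply mul_right_cancel₀ hX2
        linear_combination -hq' - hax2 + 2 * X ^ 2 * hxx
      · rw [eq_div_iff (by positivity : (4:ℝ) * y ≠ 0)]
        apply mul_right_cancel₀ hX2
        linear_combination -hq' - hax2 - 2 * X ^ 2 * hxx
  · intro x y hy e1 e2
    have hy' : y ≠ 0 := ne_of_gt hy
    have hx : x = ((r2 - r1) / X) * y := by
      rw [e1, e2]; field_simp; ring
    refine ⟨hx, ?_⟩
    have hE' : (0:ℝ) ≤ 2 * X ^ 2 * (2 * r1 * r2 + r1 + r2) - X ^ 4 - (r2 - r1) ^ 2 := by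
      have hEeq : 2 * X ^ 2 * (2 * r1 * r2 + r1 + r2) - X ^ 4 - (r2 - r1) ^ 2
          = (X * (x ^ 2 + y ^ 2 - X ^ 2 - 1)) ^ 2 / (4 * y ^ 2) := by
        rw [e1, e2]; field_simp; ring
      rw [hEeq]; positivity
    set E : ℝ := 2 * X ^ 2 * (2 * r1 * r2 + r1 + r2) - X ^ 4 - (r2 - r1) ^ 2 with hEdef
    set S : ℝ := Real.sqrt E with hSdef
    have hsq : S ^ 2 = E := Real.sq_sqrt hE'
    have hT : ((X ^ 2 + (r2 - r1) ^ 2) * y - X ^ 2 * (1 + r1 + r2)) ^ 2 = X ^ 2 * E := by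
      rw [hEdef, e1, e2]; field_simp; ring
    have h0 : (((X ^ 2 + (r2 - r1) ^ 2) * y - X ^ 2 * (1 + r1 + r2)) - X * S) *
        (((X ^ 2 + (r2 - r1) ^ 2) * y - X ^ 2 * (1 + r1 + r2)) + X * S) = 0 := by
      linear_combination hT - X ^ 2 * hsq
    have hden : (1 + ((r2 - r1) / X) ^ 2) ≠ 0 := by positivity
    rcases mul_eq_zero.mp h0 with h | h
    · refine ⟨1, Or.inl rfl, ?_⟩
      rw [eq_div_iff hden]
      have hc : (X ^ 2 + (r2 - r1) ^ 2) * y - X ^ 2 * (1 + r1 + r2) = X * S := by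
        linarith
      field_simp
      linear_combination hc
    · refine ⟨-1, Or.inr rfl, ?_⟩
      rw [eq_div_iff hden]
      have hc : (X ^ 2 + (r2 - r1) ^ 2) * y - X ^ 2 * (1 + r1 + r2) = -(X * S) := by
        linarith
      field_simp
      linear_combination hc
end
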